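/- Opening additional hubs weakly increases the CA first-iteration estimate of total served demand: if H ⊆ H' ⊆ H^p are two sets of open hubs, then ∑_{r∈R} y^H_r ≤ ∑_{r∈R} y^{H'}_r, where y^H is the first-iteration CA estimate computed with feasibility indicator ẽ^H. (Proof idea: ∑_r y^H_r = ∑_{(i,j): s^H_{ij}>0} λ̂_{ij}, ẽ^H ≤ ẽ^{H'} pointwise, hence the set of origin–destination pairs with s^H_{ij} > 0 is contained in the set with s^{H'}_{ij} > 0, and λ̂ is nonnegative.) -/
import Mathlib


open Finset

/-- Opening additional hubs weakly increases the CA first-iteration estimate of total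
served demand: if `HA ⊆ HB` are two sets of open hubs, then `∑ r, yA r ≤ ∑ r, yB r`,
where `yA`, `yB` are the first-iteration CA estimates computed with the feasibility
indicators `ẽ^HA`, `ẽ^HB`. -/
theorem ca_estimate_monotone_in_hubs
    {R Hp : Type*} [Fintype R] [Fintype Hp]
    (dhat : R → ℝ) (lam : R → R → ℝ) (e : R → R → Hp → R → ℝ)
    (HA HB : Finset Hp)
    (etilA etilB : R → R → R → ℝ) (sA sB : R → R → ℝ) (yA yB : R → ℝ)
    (hd : ∀ r, 0 ≤ dhat r)
    (hlam : ∀ i j, 0 ≤ lam i j)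
    (he : ∀ i j h r, e i j h r = 0 ∨ e i j h r = 1)
    (hAB : HA ⊆ HB)
    (hetilA : ∀ i j r, etilA i j r = min 1 (∑ h ∈ HA, e i j h r))
    (hetilB : ∀ i j r, etilB i j r = min 1 (∑ h ∈ HB, e i j h r))
    (hsA : ∀ i j, sA i j = ∑ r, etilA i j r * dhat r)
    (hsB : ∀ i j, sB i j = ∑ r, etilB i j r * dhat r)
    (hyA : ∀ r, yA r = ∑ p ∈ Finset.univ.filter (fun p : R × R => 0 < sA p.1 p.2),
      etilA p.1 p.2 r * lam p.1 p.2 * dhat r / sA p.1 p.2)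
    (hyB : ∀ r, yB r = ∑ p ∈ Finset.univ.filter (fun p : R × R => 0 < sB p.1 p.2),
      etilB p.1 p.2 r * lam p.1 p.2 * dhat r / sB p.1 p.2) :
    ∑ r, yA r ≤ ∑ r, yB r := by
    -- nonnegativity of e
  have he0 : ∀ i j h r, 0 ≤ e i j h r := by
    intro i j h r; rcases he i j h r with h1 | h1 <;> simp [h1]
  -- key: total sum equals sum of lambdas over pairs with positive s
  have key : ∀ (etil : R → R → R → ℝ) (s : R → R → ℝ) (y : R → ℝ),
      (∀ i j, s i j = ∑ r, etil i j r * dhat r) →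
      (∀ r, y r = ∑ p ∈ Finset.univ.filter (fun p : R × R => 0 < s p.1 p.2),
        etil p.1 p.2 r * lam p.1 p.2 * dhat r / s p.1 p.2) →
      ∑ r, y r = ∑ p ∈ Finset.univ.filter (fun p : R × R => 0 < s p.1 p.2),
        lam p.1 p.2 := by
    intro etil s y hs hy
    calc ∑ r, y r
        = ∑ p ∈ Finset.univ.filter (fun p : R × R => 0 < s p.1 p.2),
            ∑ r, etil p.1 p.2 r * lam p.1 p.2 * dhat r / s p.1 p.2 := by
          rw [Finset.sum_comm]
          exact Finset.sum_congr rfl fun r _ => hy r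
      _ = ∑ p ∈ Finset.univ.filter (fun p : R × R => 0 < s p.1 p.2),
            lam p.1 p.2 := by
          refine Finset.sum_congr rfl fun p hp => ?_
          rw [Finset.mem_filter] at hp
          have hsp : s p.1 p.2 ≠ 0 := ne_of_gt hp.2
          have : ∑ r, etil p.1 p.2 r * lam p.1 p.2 * dhat r / s p.1 p.2
              = (∑ r, etil p.1 p.2 r * dhat r) * lam p.1 p.2 / s p.1 p.2 := by
            rw [Finset.sum_mul, Finset.sum_div]
            exact Finset.sum_congr rfl fun r _ => by ring
          rw [this, ← hs, mul_div_assoc, mul_comm]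
          field_simp
  rw [key etilA sA yA hsA hyA, key etilB sB yB hsB hyB]
  refine Finset.sum_le_sum_of_subset_of_nonneg ?_ (fun p _ _ => hlam p.1 p.2)
  intro p hp
  rw [Finset.mem_filter] at hp ⊢
  refine ⟨Finset.mem_univ _, ?_⟩
  have hle : sA p.1 p.2 ≤ sB p.1 p.2 := by
    rw [hsA, hsB]
    refine Finset.sum_le_sum fun r _ => ?_
    refine mul_le_mul_of_nonneg_right ?_ (hd r)
    rw [hetilA, hetilB]
    exact min_le_min le_rfl (Finset.sum_le_sum_of_subset_of_nonneg hAB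
      (fun h _ _ => he0 p.1 p.2 h r))
  exact lt_of_lt_of_le hp.2 hle
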